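/- Let K be a spherical convex body contained in the open hemisphere S ⊆ S^n such that the center c of S lies in proj_{L,H}(K). Then proj_{L,H}(K) is spherically convex. -/

import Mathlib

open Real Set MeasureTheory Metric
open scoped RealInnerProductSpace ENNReal

noncomputable section

/-- Euclidean `(n+1)`-space; the unit sphere `S^n` is `Metric.sphere (0 : EN n) 1`. -/
abbrev EN (n : ℕ) : Type := EuclideanSpace ℝ (Fin (n + 1))

/-- The spherical distance `d_s(x,y) = arccos ⟨x,y⟩`. -/
def sphDistN (n : ℕ) (x y : EN n) : ℝ := Real.arccos ⟪x, y⟫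

/-- The shorter great-circle arc (spherical segment) joining two non-antipodal
unit vectors: the radial projection of the Euclidean segment-cone. -/
def sphSegN (n : ℕ) (x y : EN n) : Set (EN n) :=
  {z | ∃ a b : ℝ, 0 ≤ a ∧ 0 ≤ b ∧ a • x + b • y ≠ 0 ∧
      z = ‖a • x + b • y‖⁻¹ • (a • x + b • y)}

/-- A set is spherically convex if it consists of unit vectors, is contained in an
open hemisphere, and contains the shorter arc joining any two of its (non-antipodal)
points. -/
def SphConvexN (n : ℕ) (K : Set (EN n)) : Prop :=
  K ⊆ sphere (0 : EN n) 1 ∧ (∃ e : EN n, ‖e‖ = 1 ∧ ∀ x ∈ K, 0 < ⟪e, x⟫) ∧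
    ∀ x ∈ K, ∀ y ∈ K, x ≠ -y → sphSegN n x y ⊆ K

/-- Relative interior of a subset of the sphere (interior within the sphere). -/
def relIntN (n : ℕ) (K : Set (EN n)) : Set (EN n) :=
  {x | ∃ ε : ℝ, 0 < ε ∧ sphere (0 : EN n) 1 ∩ ball x ε ⊆ K}

/-- A spherical convex body: compact, spherically convex, with nonempty
(relative) interior. -/
def SphBodyN (n : ℕ) (K : Set (EN n)) : Prop :=
  IsCompact K ∧ SphConvexN n K ∧ (K ∩ relIntN n K).Nonempty

/-- The center `c` of the fixed open hemisphere `S`: the first standard basis vector. -/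
def e0 (n : ℕ) : EN n := EuclideanSpace.single 0 1

/-- The second standard basis vector, spanning (with `c`) the plane of the great
circle `L̄`. -/
def e1 (n : ℕ) : EN n := EuclideanSpace.single 1 1

/-- The fixed open hemisphere `S` centered at `c`. -/
def hemiN (n : ℕ) : Set (EN n) := {p ∈ sphere (0 : EN n) 1 | 0 < ⟪e0 n, p⟫}

/-- The point `cos θ cos φ • e₀ + cos θ sin φ • e₁ + sin θ • u` of `S`; here `θ` is
the spherical distance from the great circle `L̄` (in the plane of `e₀,e₁`), `u` is a
unit vector orthogonal to this plane, and `φ` parametrizes the distance curve. -/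
def sphPtN (n : ℕ) (θ φ : ℝ) (u : EN n) : EN n :=
  (Real.cos θ * Real.cos φ) • e0 n + (Real.cos θ * Real.sin φ) • e1 n + Real.sin θ • u

/-- `u` is a unit vector orthogonal to the plane of the great circle `L̄`. -/
def inAxisComp (n : ℕ) (u : EN n) : Prop := ‖u‖ = 1 ∧ ⟪e0 n, u⟫ = 0 ∧ ⟪e1 n, u⟫ = 0

/-- The distance curve with axis `L` at spherical distance `θ` from `L̄`, lying in the
2-dimensional great sphere through `L̄` determined by `u`; for `θ = 0` it is `L` itself. -/
def distCurveN (n : ℕ) (θ : ℝ) (u : EN n) : Set (EN n) :=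
  {p | ∃ φ ∈ Ioo (-(π/2)) (π/2), p = sphPtN n θ φ u}

/-- The set of parameters `φ` at which the distance curve determined by `(θ,u)`
meets `K`. -/
def sliceN (n : ℕ) (K : Set (EN n)) (θ : ℝ) (u : EN n) : Set ℝ :=
  {φ | φ ∈ Ioo (-(π/2)) (π/2) ∧ sphPtN n θ φ u ∈ K}

/-- The connectedness property: `X ∩ C` is connected (possibly empty or a point)
for every distance curve `C` with axis `L`. -/
def ConnPropN (n : ℕ) (X : Set (EN n)) : Prop :=
  ∀ θ : ℝ, 0 ≤ θ → θ < π/2 → ∀ u : EN n, inAxisComp n u →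
    IsPreconnected (X ∩ distCurveN n θ u)

/-- The spherical Steiner symmetral `σ_{L,H}(X)`: on each distance curve `C` with
axis `L` meeting `X`, the arc `X ∩ C` is replaced by the closed subarc of `C` of the
same arclength centered at the point `C ∩ H` (the point with parameter `φ = 0`). -/
def steinerN (n : ℕ) (X : Set (EN n)) : Set (EN n) :=
  {p | ∃ θ : ℝ, 0 ≤ θ ∧ θ < π/2 ∧ ∃ u : EN n, inAxisComp n u ∧ ∃ φ : ℝ,
      p = sphPtN n θ φ u ∧ (sliceN n X θ u).Nonempty ∧
      |φ| ≤ (sSup (sliceN n X θ u) - sInf (sliceN n X θ u)) / 2}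

/-- The projection of `X ⊆ S` onto `H` along `L`: the set of points `q ∈ H` such
that the distance curve with axis `L` through `q` meets `X`. -/
def projLH (n : ℕ) (X : Set (EN n)) : Set (EN n) :=
  {q | ∃ θ : ℝ, 0 ≤ θ ∧ θ < π/2 ∧ ∃ u : EN n, inAxisComp n u ∧
      q = sphPtN n θ 0 u ∧ (X ∩ distCurveN n θ u).Nonempty}

/-- `L = L̄ ∩ S`: the half great circle in the plane of `e₀, e₁` inside `S`. -/
def LsetN (n : ℕ) : Set (EN n) :=
  {p | ∃ φ ∈ Ioo (-(π/2)) (π/2), p = Real.cos φ • e0 n + Real.sin φ • e1 n}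

/-- The spherical convex hull: intersection of all spherically convex sets
containing the given set. -/
def sphConvexHullN (n : ℕ) (A : Set (EN n)) : Set (EN n) :=
  ⋂₀ {C | SphConvexN n C ∧ A ⊆ C}

/-! Write `x = ⟪e0, x⟫ • e0 + ⟪e1, x⟫ • e1 + axisPerp x`. In the open hemisphere the distance
curves with axis `L` are exactly the fibres of `axisPerp`, so a point `q ∈ H` lies in the
projection of `K` iff some point of `K` has the same `axisPerp`-component as `q`.

Let `q₁, q₂` be in the projection, with witnesses `p₁, p₂ ∈ K`, and let `z ∝ a q₁ + b q₂`.
The point `v ∝ a p₁ + b p₂` of `K` has `axisPerp v = λ • axisPerp z` with `λ ≥ 1`, because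
`‖a p₁ + b p₂‖ ≤ ‖a q₁ + b q₂‖` by Cauchy–Schwarz in the plane of `L̄`. Since `c` is in the
projection, `K` meets `L` in a point `p₀`, where `axisPerp p₀ = 0`. Along the arc from `p₀` to `v`,
which lies in `K`, this factor moves continuously from `0` to `λ`, so by the intermediate value
theorem it equals `1` at some point of `K`, and that point witnesses `z`. -/

section

variable {n : ℕ}

lemma norm_e0 : ‖e0 n‖ = 1 := by
  simp [e0]

lemma norm_e1 : ‖e1 n‖ = 1 := by
  simp [e1]

lemma inner_e0_e1 (hn : 1 ≤ n) : ⟪e0 n, e1 n⟫ = 0 := by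
  have h : (1 : Fin (n + 1)) ≠ 0 := by
    rw [Ne, Fin.ext_iff, Fin.val_one', Fin.val_zero, Nat.mod_eq_of_lt (by omega)]
    omega
  simp [e0, e1, EuclideanSpace.inner_single_left, h]

lemma inner_e1_e0 (hn : 1 ≤ n) : ⟪e1 n, e0 n⟫ = 0 := by
  rw [real_inner_comm, inner_e0_e1 hn]

lemma exists_inAxisComp (hn : 2 ≤ n) : ∃ u : EN n, inAxisComp n u := by
  refine ⟨EuclideanSpace.single ⟨2, by omega⟩ 1, by simp, ?_, ?_⟩ <;>
    simp [e0, e1, EuclideanSpace.inner_single_left, Fin.ext_iff,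
      Nat.mod_eq_of_lt (show 1 < n + 1 by omega)]

def axisPerp (n : ℕ) : EN n →ₗ[ℝ] EN n :=
  LinearMap.id - (innerₛₗ ℝ (e0 n)).smulRight (e0 n) - (innerₛₗ ℝ (e1 n)).smulRight (e1 n)

lemma axisPerp_apply (x : EN n) :
    axisPerp n x = x - ⟪e0 n, x⟫ • e0 n - ⟪e1 n, x⟫ • e1 n := rfl

lemma eq_add_axisPerp (x : EN n) :
    x = ⟪e0 n, x⟫ • e0 n + ⟪e1 n, x⟫ • e1 n + axisPerp n x := by
  rw [axisPerp_apply]; abel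

lemma inner_e0_axisPerp (hn : 1 ≤ n) (x : EN n) : ⟪e0 n, axisPerp n x⟫ = 0 := by
  simp [axisPerp_apply, inner_sub_right, real_inner_smul_right, norm_e0, inner_e0_e1 hn]

lemma inner_e1_axisPerp (hn : 1 ≤ n) (x : EN n) : ⟪e1 n, axisPerp n x⟫ = 0 := by
  simp [axisPerp_apply, inner_sub_right, real_inner_smul_right, norm_e1, inner_e1_e0 hn]

lemma axisPerp_e0 (hn : 1 ≤ n) : axisPerp n (e0 n) = 0 := by
  simp [axisPerp_apply, norm_e0, inner_e1_e0 hn]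

lemma inner_eq_add_inner_axisPerp (hn : 1 ≤ n) (x y : EN n) :
    ⟪x, y⟫ = ⟪e0 n, x⟫ * ⟪e0 n, y⟫ + ⟪e1 n, x⟫ * ⟪e1 n, y⟫ +
      ⟪axisPerp n x, axisPerp n y⟫ := by
  conv_lhs => rw [eq_add_axisPerp x, eq_add_axisPerp y]
  simp only [inner_add_left, inner_add_right, real_inner_smul_left, real_inner_smul_right,
    real_inner_self_eq_norm_sq, norm_e0, norm_e1, inner_e0_e1 hn, inner_e1_e0 hn,
    inner_e0_axisPerp hn, inner_e1_axisPerp hn, real_inner_comm (e0 n), real_inner_comm (e1 n)]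
  ring

lemma norm_sq_eq_add_norm_sq_axisPerp (hn : 1 ≤ n) (x : EN n) :
    ‖x‖ ^ 2 = ⟪e0 n, x⟫ ^ 2 + ⟪e1 n, x⟫ ^ 2 + ‖axisPerp n x‖ ^ 2 := by
  simp only [← real_inner_self_eq_norm_sq, inner_eq_add_inner_axisPerp hn x x]
  ring

section sphPtN

variable {u : EN n} (hn : 1 ≤ n) (hu : inAxisComp n u) (θ φ : ℝ)
include hn hu

lemma inner_e0_sphPtN : ⟪e0 n, sphPtN n θ φ u⟫ = cos θ * cos φ := by
  simp [sphPtN, inner_add_right, real_inner_smul_right, norm_e0, inner_e0_e1 hn, hu.2.1]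

lemma inner_e1_sphPtN : ⟪e1 n, sphPtN n θ φ u⟫ = cos θ * sin φ := by
  simp [sphPtN, inner_add_right, real_inner_smul_right, norm_e1, inner_e1_e0 hn, hu.2.2]

lemma axisPerp_sphPtN : axisPerp n (sphPtN n θ φ u) = sin θ • u := by
  rw [axisPerp_apply, inner_e0_sphPtN hn hu, inner_e1_sphPtN hn hu, sphPtN]
  abel

lemma norm_sphPtN : ‖sphPtN n θ φ u‖ = 1 := by
  have h := norm_sq_eq_add_norm_sq_axisPerp hn (sphPtN n θ φ u)
  rw [inner_e0_sphPtN hn hu, inner_e1_sphPtN hn hu, axisPerp_sphPtN hn hu, norm_smul,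
    hu.1, mul_one, norm_eq_abs, sq_abs] at h
  rw [← pow_eq_one_iff_of_nonneg (norm_nonneg _) two_ne_zero]
  linear_combination h + cos θ ^ 2 * sin_sq_add_cos_sq φ + sin_sq_add_cos_sq θ

end sphPtN

lemma exists_mem_Ioo_mul_cos_mul_sin {A B c : ℝ} (hA : 0 < A) (hc : 0 < c)
    (h : A ^ 2 + B ^ 2 = c ^ 2) :
    ∃ φ ∈ Ioo (-(π / 2)) (π / 2), c * cos φ = A ∧ c * sin φ = B := by
  obtain ⟨hBc, hcB⟩ := abs_lt_of_sq_lt_sq' (by nlinarith : B ^ 2 < c ^ 2) hc.le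
  have hB1 : -1 < B / c := by rw [lt_div_iff₀ hc]; linarith
  have hB2 : B / c < 1 := by rwa [div_lt_one hc]
  refine ⟨arcsin (B / c), ⟨neg_pi_div_two_lt_arcsin.2 hB1, arcsin_lt_pi_div_two.2 hB2⟩, ?_, ?_⟩
  · have h1 : 1 - (B / c) ^ 2 = (A / c) ^ 2 := by
      field_simp
      linarith
    rw [cos_arcsin, h1, sqrt_sq (div_pos hA hc).le]
    field_simp
  · rw [sin_arcsin hB1.le hB2.le]
    field_simp

lemma mem_hemiN_iff {x : EN n} : x ∈ hemiN n ↔ ‖x‖ = 1 ∧ 0 < ⟪e0 n, x⟫ := by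
  simp [hemiN]

lemma mem_distCurveN_of_axisPerp_eq (hn : 1 ≤ n) {x u : EN n} {θ : ℝ} (hx : x ∈ hemiN n)
    (hu : inAxisComp n u) (hθ : 0 < cos θ) (hxu : axisPerp n x = sin θ • u) :
    x ∈ distCurveN n θ u := by
  rw [mem_hemiN_iff] at hx
  have hsq := norm_sq_eq_add_norm_sq_axisPerp hn x
  rw [hx.1, hxu, norm_smul, hu.1, mul_one, norm_eq_abs, sq_abs] at hsq
  obtain ⟨φ, hφ, hA, hB⟩ := exists_mem_Ioo_mul_cos_mul_sin (B := ⟪e1 n, x⟫) hx.2 hθ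
    (by linear_combination -hsq - sin_sq_add_cos_sq θ)
  refine ⟨φ, hφ, ?_⟩
  rw [eq_add_axisPerp x, sphPtN, hA, hB, hxu]

lemma exists_axisPerp_eq_sin_smul (hn : 2 ≤ n) {x : EN n} (hx : x ∈ hemiN n) :
    ∃ θ, 0 ≤ θ ∧ θ < π / 2 ∧ ∃ u, inAxisComp n u ∧ axisPerp n x = sin θ • u := by
  rw [mem_hemiN_iff] at hx
  have hsq := norm_sq_eq_add_norm_sq_axisPerp (by omega) x
  have hw1 : ‖axisPerp n x‖ < 1 := by
    rw [← pow_lt_one_iff_of_nonneg (norm_nonneg _) two_ne_zero]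
    nlinarith [hx.2, sq_nonneg ⟪e1 n, x⟫]
  set w := axisPerp n x
  refine ⟨arcsin ‖w‖, arcsin_nonneg.2 (norm_nonneg _), arcsin_lt_pi_div_two.2 hw1, ?_⟩
  rw [sin_arcsin (by linarith [norm_nonneg w]) hw1.le]
  by_cases hw : w = 0
  · obtain ⟨u, hu⟩ := exists_inAxisComp hn
    exact ⟨u, hu, by simp [hw]⟩
  refine ⟨‖w‖⁻¹ • w, ⟨norm_smul_inv_norm hw, ?_, ?_⟩, ?_⟩
  · rw [real_inner_smul_right, inner_e0_axisPerp (by omega), mul_zero]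
  · rw [real_inner_smul_right, inner_e1_axisPerp (by omega), mul_zero]
  · rw [smul_smul, mul_inv_cancel₀ (norm_ne_zero_iff.2 hw), one_smul]

lemma mem_projLH_iff (hn : 2 ≤ n) {X : Set (EN n)} (hX : X ⊆ hemiN n) {q : EN n} :
    q ∈ projLH n X ↔ q ∈ hemiN n ∧ ⟪e1 n, q⟫ = 0 ∧ ∃ x ∈ X, axisPerp n x = axisPerp n q := by
  have hn1 : 1 ≤ n := by omega
  constructor
  · rintro ⟨θ, hθ0, hθ, u, hu, rfl, x, hxX, φ, -, rfl⟩
    refine ⟨mem_hemiN_iff.2 ⟨norm_sphPtN hn1 hu θ 0, ?_⟩, ?_, _, hxX, ?_⟩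
    · rw [inner_e0_sphPtN hn1 hu, cos_zero, mul_one]
      exact cos_pos_of_mem_Ioo ⟨by linarith [pi_pos], hθ⟩
    · rw [inner_e1_sphPtN hn1 hu, sin_zero, mul_zero]
    · rw [axisPerp_sphPtN hn1 hu, axisPerp_sphPtN hn1 hu]
  · rintro ⟨hq, hq1, x, hxX, hxq⟩
    obtain ⟨θ, hθ0, hθ, u, hu, hqu⟩ := exists_axisPerp_eq_sin_smul hn hq
    have hcos : 0 < cos θ := cos_pos_of_mem_Ioo ⟨by linarith [pi_pos], hθ⟩
    obtain ⟨φ, hφ, rfl⟩ := mem_distCurveN_of_axisPerp_eq hn1 hq hu hcos hqu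
    rw [inner_e1_sphPtN hn1 hu, mul_eq_zero, or_iff_right hcos.ne'] at hq1
    obtain rfl : φ = 0 := (sin_eq_zero_iff_of_lt_of_lt (by linarith [hφ.1, pi_pos])
      (by linarith [hφ.2, pi_pos])).1 hq1
    exact ⟨θ, hθ0, hθ, u, hu, rfl, x, hxX,
      mem_distCurveN_of_axisPerp_eq hn1 (hX hxX) hu hcos (hxq.trans hqu)⟩

lemma ne_neg_of_mem_hemiN {x y : EN n} (hx : x ∈ hemiN n) (hy : y ∈ hemiN n) : x ≠ -y := by
  rintro rfl
  have h1 := (mem_hemiN_iff.1 hx).2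
  have h2 := (mem_hemiN_iff.1 hy).2
  rw [inner_neg_right] at h1
  linarith

lemma pos_add_of_smul_add_smul_ne_zero {E : Type*} [AddCommGroup E] [Module ℝ E] {x y : E}
    {a b : ℝ} (ha : 0 ≤ a) (hb : 0 ≤ b) (h : a • x + b • y ≠ 0) : 0 < a + b := by
  by_contra! hab
  obtain rfl : a = 0 := by linarith
  obtain rfl : b = 0 := by linarith
  simp at h

lemma sphSegN_subset_hemiN {x y : EN n} (hx : x ∈ hemiN n) (hy : y ∈ hemiN n) :
    sphSegN n x y ⊆ hemiN n := by
  rintro _ ⟨a, b, ha, hb, hw, rfl⟩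
  have hx0 := (mem_hemiN_iff.1 hx).2
  have hy0 := (mem_hemiN_iff.1 hy).2
  refine mem_hemiN_iff.2 ⟨norm_smul_inv_norm hw, ?_⟩
  rw [real_inner_smul_right, inner_add_right, real_inner_smul_right, real_inner_smul_right]
  refine mul_pos (by positivity) ?_
  rcases ha.eq_or_lt with rfl | ha'
  · have hb' := pos_add_of_smul_add_smul_ne_zero le_rfl hb hw
    rw [zero_add] at hb'
    positivity
  · positivity

lemma smul_add_smul_ne_zero {E : Type*} [NormedAddCommGroup E] [NormedSpace ℝ E] {x y : E}
    (hx : ‖x‖ = 1) (hy : ‖y‖ = 1) (hxy : x ≠ -y) {a b : ℝ} (ha : 0 ≤ a) (hb : 0 ≤ b)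
    (hab : 0 < a + b) : a • x + b • y ≠ 0 := by
  intro h
  have hax := eq_neg_of_add_eq_zero_left h
  have hab' : a = b := by
    simpa [norm_smul, hx, hy, abs_of_nonneg ha, abs_of_nonneg hb] using congrArg norm hax
  subst hab'
  rw [← smul_neg] at hax
  exact hxy (smul_right_injective E (by linarith) hax)

lemma exists_mem_sphSegN_map_eq_smul {M : Type*} [AddCommGroup M] [Module ℝ M]
    (f : EN n →ₗ[ℝ] M) {x y : EN n} (hx : ‖x‖ = 1) (hy : ‖y‖ = 1) (hxy : x ≠ -y)
    (hfx : f x = 0) {c : ℝ} (hc : c ∈ Icc 0 1) : ∃ z ∈ sphSegN n x y, f z = c • f y := by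
  set F : ℝ → EN n := fun t => (1 - t) • x + t • y
  have hF : ∀ t ∈ Icc (0 : ℝ) 1, F t ≠ 0 := fun t ht =>
    smul_add_smul_ne_zero hx hy hxy (by linarith [ht.2]) ht.1 (by linarith)
  have hcont : ContinuousOn (fun t => t / ‖F t‖) (Icc 0 1) :=
    continuousOn_id.div (by fun_prop) fun t ht => norm_ne_zero_iff.2 (hF t ht)
  obtain ⟨t, ht, hct⟩ := intermediate_value_Icc zero_le_one hcont (by simpa [F, hy] using hc)
  refine ⟨‖F t‖⁻¹ • F t, ⟨1 - t, t, by linarith [ht.2], ht.1, hF t ht, rfl⟩, ?_⟩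
  simp [F, hfx, smul_smul, ← hct, div_eq_inv_mul]

lemma norm_smul_add_smul_le {E : Type*} [NormedAddCommGroup E] [InnerProductSpace ℝ E]
    {x₁ x₂ y₁ y₂ : E} (h₁ : ‖x₁‖ = ‖y₁‖) (h₂ : ‖x₂‖ = ‖y₂‖) (h : ⟪x₁, x₂⟫ ≤ ⟪y₁, y₂⟫)
    {a b : ℝ} (ha : 0 ≤ a) (hb : 0 ≤ b) : ‖a • x₁ + b • x₂‖ ≤ ‖a • y₁ + b • y₂‖ := by
  rw [← pow_le_pow_iff_left₀ (norm_nonneg _) (norm_nonneg _) two_ne_zero, norm_add_sq_real,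
    norm_add_sq_real]
  simp only [norm_smul, real_inner_smul_left, real_inner_smul_right, h₁, h₂]
  nlinarith [mul_nonneg ha hb]

lemma inner_le_inner_of_axisPerp_eq (hn : 1 ≤ n) {p₁ p₂ q₁ q₂ : EN n} (hp₁ : ‖p₁‖ = 1)
    (hp₂ : ‖p₂‖ = 1) (hq₁ : q₁ ∈ hemiN n) (hq₂ : q₂ ∈ hemiN n) (hq₁e1 : ⟪e1 n, q₁⟫ = 0)
    (hq₂e1 : ⟪e1 n, q₂⟫ = 0) (h₁ : axisPerp n p₁ = axisPerp n q₁)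
    (h₂ : axisPerp n p₂ = axisPerp n q₂) : ⟪p₁, p₂⟫ ≤ ⟪q₁, q₂⟫ := by
  rw [mem_hemiN_iff] at hq₁ hq₂
  have hp₁sq := norm_sq_eq_add_norm_sq_axisPerp hn p₁
  have hp₂sq := norm_sq_eq_add_norm_sq_axisPerp hn p₂
  have hq₁sq := norm_sq_eq_add_norm_sq_axisPerp hn q₁
  have hq₂sq := norm_sq_eq_add_norm_sq_axisPerp hn q₂
  rw [inner_eq_add_inner_axisPerp hn, inner_eq_add_inner_axisPerp hn q₁, h₁, h₂, hq₁e1, hq₂e1]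
  rw [h₁, hp₁] at hp₁sq
  rw [h₂, hp₂] at hp₂sq
  rw [hq₁.1, hq₁e1] at hq₁sq
  rw [hq₂.1, hq₂e1] at hq₂sq
  -- Cauchy–Schwarz in the plane of `e0, e1`, where `q₁, q₂` lie on the same ray
  nlinarith [sq_nonneg (⟪e0 n, p₁⟫ * ⟪e1 n, p₂⟫ - ⟪e1 n, p₁⟫ * ⟪e0 n, p₂⟫),
    mul_pos hq₁.2 hq₂.2]

lemma sphSegN_subset_projLH (hn : 2 ≤ n) {K : Set (EN n)} (hKS : K ⊆ hemiN n)
    (hK : ∀ x ∈ K, ∀ y ∈ K, x ≠ -y → sphSegN n x y ⊆ K) {p₀ : EN n} (hp₀ : p₀ ∈ K)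
    (hp₀L : axisPerp n p₀ = 0) {q₁ q₂ : EN n} (hq₁ : q₁ ∈ projLH n K)
    (hq₂ : q₂ ∈ projLH n K) : sphSegN n q₁ q₂ ⊆ projLH n K := by
  have hn1 : 1 ≤ n := by omega
  have hnorm : ∀ x ∈ hemiN n, ‖x‖ = 1 := fun x hx => (mem_hemiN_iff.1 hx).1
  have hne : ∀ x ∈ K, ∀ y ∈ K, x ≠ -y := fun x hx y hy => ne_neg_of_mem_hemiN (hKS hx) (hKS hy)
  rw [mem_projLH_iff hn hKS] at hq₁ hq₂
  obtain ⟨hq₁S, hq₁e1, p₁, hp₁, hpq₁⟩ := hq₁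
  obtain ⟨hq₂S, hq₂e1, p₂, hp₂, hpq₂⟩ := hq₂
  intro z hz
  rw [mem_projLH_iff hn hKS]
  refine ⟨sphSegN_subset_hemiN hq₁S hq₂S hz, ?_⟩
  obtain ⟨a, b, ha, hb, hw, rfl⟩ := hz
  set w := a • q₁ + b • q₂
  set v := a • p₁ + b • p₂
  have hv : v ≠ 0 := smul_add_smul_ne_zero (hnorm _ (hKS hp₁)) (hnorm _ (hKS hp₂))
    (hne _ hp₁ _ hp₂) ha hb (pos_add_of_smul_add_smul_ne_zero ha hb hw)
  have hvw : ‖v‖ ≤ ‖w‖ := by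
    refine norm_smul_add_smul_le ?_ ?_ ?_ ha hb
    · rw [hnorm _ (hKS hp₁), hnorm _ hq₁S]
    · rw [hnorm _ (hKS hp₂), hnorm _ hq₂S]
    · exact inner_le_inner_of_axisPerp_eq hn1 (hnorm _ (hKS hp₁)) (hnorm _ (hKS hp₂)) hq₁S hq₂S
        hq₁e1 hq₂e1 hpq₁ hpq₂
  have hvK : ‖v‖⁻¹ • v ∈ K := hK p₁ hp₁ p₂ hp₂ (hne _ hp₁ _ hp₂) ⟨a, b, ha, hb, hv, rfl⟩
  obtain ⟨x, hx, hxv⟩ := exists_mem_sphSegN_map_eq_smul (axisPerp n) (hnorm _ (hKS hp₀))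
    (norm_smul_inv_norm hv) (hne _ hp₀ _ hvK) hp₀L (y := ‖v‖⁻¹ • v) (c := ‖v‖ / ‖w‖)
    ⟨by positivity, div_le_one_of_le₀ hvw (norm_nonneg _)⟩
  refine ⟨?_, x, hK _ hp₀ _ hvK (hne _ hp₀ _ hvK) hx, ?_⟩
  · simp [w, real_inner_smul_right, inner_add_right, hq₁e1, hq₂e1]
  · have hv' : ‖v‖ ≠ 0 := norm_ne_zero_iff.2 hv
    rw [hxv]
    simp only [v, w, map_smul, map_add, hpq₁, hpq₂, smul_smul] at hv' ⊢
    congr 1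
    field_simp

end

/-- If `K ⊆ S` is a spherical convex body whose projection onto `H`
along `L` contains the center `c` of `S`, then this projection is spherically
convex. -/
theorem projLH_convex (n : ℕ) (hn : 2 ≤ n) (K : Set (EN n))
    (hK : SphBodyN n K) (hKS : K ⊆ hemiN n) (hc : e0 n ∈ projLH n K) :
    SphConvexN n (projLH n K) := by
  have hproj : projLH n K ⊆ hemiN n := fun q hq => ((mem_projLH_iff hn hKS).1 hq).1
  obtain ⟨-, -, p₀, hp₀, hp₀L⟩ := (mem_projLH_iff hn hKS).1 hc
  refine ⟨fun q hq => (hproj hq).1, ⟨e0 n, norm_e0, fun q hq => (hproj hq).2⟩,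
    fun q₁ hq₁ q₂ hq₂ _ => ?_⟩
  rw [axisPerp_e0 (by omega)] at hp₀L
  exact sphSegN_subset_projLH hn hKS hK.2.1.2.2 hp₀ hp₀L hq₁ hq₂
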